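/- arXiv:1608.07902 — 3 statements merged into one kernel-verified Lean document; each statement's English description precedes it below -/
import Mathlib

section
/- Let T > 0, let a : ℝ → ℝ be continuous and T-periodic, and let b, d : ℝ → ℝ be continuous, T-periodic, and everywhere positive. Then the scalar ODE u'(t) = u(t)(a(t) − b(t) u(t)) + d(t) has exactly one T-periodic solution u* with u*(t) > 0 for all t ∈ ℝ; moreover, for every solution u : [0,∞) → ℝ of this ODE with u(0) ≥ 0, one has u(t) − u*(t) → 0 as t → ∞. -/
/-!
Clamping the state to `[0, M]` turns the right-hand side into a globally Lipschitz, bounded field.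
For `M` large the field is negative at `M`, and it equals `d > 0` at `0`, so `[0, M]` is forward
invariant; the time-`T` map of the flow is then a continuous self-map of `[0, M]`, and the orbit of
one of its fixed points extends to a `T`-periodic solution `u*`, positive because `u*' = d > 0`
wherever `u*` would vanish.

If `u ≥ 0` is any solution, `v = u - u*` satisfies `v' = (a - b (u + u*)) v` with
`a - b (u + u*) ≤ a - b u*`, while integrating `(log u*)' = a - b u* + d / u*` over a period gives
`∫₀ᵀ (a - b u*) = -∫₀ᵀ d / u* < 0`; hence `v → 0` exponentially. A second positive periodic
solution is therefore attracted to `u*`, and being periodic it equals `u*`.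
-/

open Filter Topology Set Function
open scoped NNReal

theorem image_le_of_deriv_right_neg_of_eq {u u' : ℝ → ℝ} {t₀ t₁ c : ℝ}
    (hu : ContinuousOn u (Icc t₀ t₁)) (hu' : ∀ t ∈ Ico t₀ t₁, HasDerivWithinAt u (u' t) (Ici t) t)
    (h₀ : u t₀ ≤ c) (hc : ∀ t ∈ Ico t₀ t₁, u t = c → u' t < 0) :
    ∀ t ∈ Icc t₀ t₁, u t ≤ c :=
  image_le_of_deriv_right_lt_deriv_boundary hu hu' h₀ (fun _ ↦ hasDerivAt_const _ c) hc

theorem le_image_of_deriv_right_pos_of_eq {u u' : ℝ → ℝ} {t₀ t₁ c : ℝ}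
    (hu : ContinuousOn u (Icc t₀ t₁)) (hu' : ∀ t ∈ Ico t₀ t₁, HasDerivWithinAt u (u' t) (Ici t) t)
    (h₀ : c ≤ u t₀) (hc : ∀ t ∈ Ico t₀ t₁, u t = c → 0 < u' t) :
    ∀ t ∈ Icc t₀ t₁, c ≤ u t :=
  image_le_of_deriv_right_lt_deriv_boundary' continuousOn_const
    (fun _ _ ↦ hasDerivWithinAt_const _ _ c) h₀ hu hu' fun t ht h ↦ hc t ht h.symm

theorem mem_Icc_of_hasDerivWithinAt {F : ℝ → ℝ → ℝ} {u : ℝ → ℝ} {t₀ t₁ m M : ℝ}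
    (hm : ∀ t, 0 < F t m) (hM : ∀ t, F t M < 0)
    (hu : ∀ t ∈ Icc t₀ t₁, HasDerivWithinAt u (F t (u t)) (Icc t₀ t₁) t)
    (h₀ : u t₀ ∈ Icc m M) : ∀ t ∈ Icc t₀ t₁, u t ∈ Icc m M := by
  have hcont : ContinuousOn u (Icc t₀ t₁) := fun t ht ↦ (hu t ht).continuousWithinAt
  have hu' : ∀ t ∈ Ico t₀ t₁, HasDerivWithinAt u (F t (u t)) (Ici t) t := fun t ht ↦
    (hu t (Ico_subset_Icc_self ht)).mono_of_mem_nhdsWithin (Icc_mem_nhdsGE_of_mem ht)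
  intro t ht
  exact ⟨le_image_of_deriv_right_pos_of_eq hcont hu' h₀.1 (fun s _ h ↦ h ▸ hm s) t ht,
    image_le_of_deriv_right_neg_of_eq hcont hu' h₀.2 (fun s _ h ↦ h ▸ hM s) t ht⟩

theorem exists_flow_of_lipschitzWith_of_norm_le {E : Type*} [NormedAddCommGroup E]
    [NormedSpace ℝ E] [CompleteSpace E] {F : ℝ → E → E} {T : ℝ} {K L : ℝ≥0} (hT : 0 ≤ T)
    (hcont : ∀ x, ContinuousOn (F · x) (Icc 0 T)) (hlip : ∀ t ∈ Icc 0 T, LipschitzWith K (F t))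
    (hbound : ∀ t ∈ Icc 0 T, ∀ x, ‖F t x‖ ≤ L) (x₀ : E) (r : ℝ≥0) :
    ∃ φ : E → ℝ → E, (∀ x ∈ Metric.closedBall x₀ r, φ x 0 = x ∧
      ∀ t ∈ Icc 0 T, HasDerivWithinAt (φ x) (F t (φ x t)) (Icc 0 T) t) ∧
      ∀ t ∈ Icc 0 T, ContinuousOn (φ · t) (Metric.closedBall x₀ r) := by
  have hPL : IsPicardLindelof F (tmin := 0) (tmax := T) ⟨0, left_mem_Icc.2 hT⟩ x₀
      (r + L * T.toNNReal) r L K :=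
    { lipschitzOnWith := fun t ht ↦ (hlip t ht).lipschitzOnWith
      continuousOn := fun x _ ↦ hcont x
      norm_le := fun t ht x _ ↦ hbound t ht x
      mul_max_le := by simp [hT] }
  obtain ⟨φ, hφ, K', hK'⟩ := hPL.exists_forall_mem_closedBall_eq_hasDerivWithinAt_lipschitzOnWith
  exact ⟨φ, hφ, fun t ht ↦ (hK' t ht).continuousOn⟩

theorem Function.Periodic.hasDerivAt_of_hasDerivWithinAt_Icc {E : Type*} [NormedAddCommGroup E]
    [NormedSpace ℝ E] {V : ℝ → E} {F : ℝ → E → E} {T : ℝ} (hT : 0 < T)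
    (hV : Periodic V T) (hF : Periodic F T)
    (hV' : ∀ t ∈ Icc 0 T, HasDerivWithinAt V (F t (V t)) (Icc 0 T) t) (t : ℝ) :
    HasDerivAt V (F t (V t)) t := by
  have hjoin : HasDerivWithinAt V (F T (V T)) (Icc T (2 * T)) T := by
    have h := (hV' (T - T) (by simp [hT.le])).scomp T (h := fun x ↦ x - T)
      ((hasDerivAt_id' T).sub_const T).hasDerivWithinAt (mapsTo_preimage _ _)
    rw [preimage_sub_const_Icc] at h
    simpa [comp_def, hV.sub_eq, hF.sub_eq, hV.eq, hF.eq, two_mul] using h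
  have hfund : ∀ s ∈ Ioc 0 T, HasDerivAt V (F s (V s)) s := by
    rintro s ⟨hs0, hsT⟩
    rcases hsT.lt_or_eq with hsT | rfl
    · exact (hV' s ⟨hs0.le, hsT.le⟩).hasDerivAt (Icc_mem_nhds hs0 hsT)
    · have h := (hV' s ⟨hs0.le, le_rfl⟩).union hjoin
      rw [Icc_union_Icc_eq_Icc hs0.le (by linarith)] at h
      exact h.hasDerivAt (Icc_mem_nhds hs0 (by linarith))
  obtain ⟨s, hs, n, rfl⟩ : ∃ s ∈ Ioc 0 T, ∃ n : ℤ, t = s + n • T :=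
    ⟨_, by simpa using toIocMod_mem_Ioc hT 0 t, _, (toIocMod_add_toIocDiv_zsmul hT 0 t).symm⟩
  have h := HasDerivAt.comp_sub_const (s + n • T) (n • T) (by simpa using hfund s hs)
  simpa [hV.sub_int_mul_eq, hV.int_mul n s, hF.int_mul n s] using h

theorem exists_flow_mapsTo_Icc {F : ℝ → ℝ → ℝ} {T m M : ℝ} {K : ℝ≥0} (hT : 0 ≤ T)
    (hmM : m ≤ M) (hFc : Continuous (uncurry F)) (hlip : ∀ t, LipschitzOnWith K (F t) (Icc m M))
    (hm : ∀ t, 0 < F t m) (hM : ∀ t, F t M < 0) :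
    ∃ φ : ℝ → ℝ → ℝ, (∀ x ∈ Icc m M, φ x 0 = x ∧ ∀ t ∈ Icc 0 T,
      φ x t ∈ Icc m M ∧ HasDerivWithinAt (φ x) (F t (φ x t)) (Icc 0 T) t) ∧
      ContinuousOn (φ · T) (Icc m M) := by
  -- Clamping the state to `[m, M]` makes the field globally Lipschitz and bounded.
  set G : ℝ → ℝ → ℝ := fun t x ↦ F t (projIcc m M hmM x)
  have hGF : ∀ t, ∀ x ∈ Icc m M, G t x = F t x := fun t x hx ↦ by simp [G, projIcc_of_mem hmM hx]
  have hGlip : ∀ t, LipschitzWith K (G t) := fun t ↦ by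
    have h := (hlip t).comp (s := univ)
      ((LipschitzWith.subtype_val _).comp (LipschitzWith.projIcc hmM)).lipschitzOnWith
      (fun x _ ↦ (projIcc m M hmM x).2)
    simpa [G, comp_def, lipschitzOnWith_univ] using h
  obtain ⟨C, hC⟩ := (isCompact_Icc.prod isCompact_Icc).exists_bound_of_continuousOn
    (hFc.continuousOn (s := Icc 0 T ×ˢ Icc m M))
  have hGbound : ∀ t ∈ Icc 0 T, ∀ x, ‖G t x‖ ≤ C.toNNReal := fun t ht x ↦
    (hC (t, _) ⟨ht, (projIcc m M hmM x).2⟩).trans (Real.le_coe_toNNReal C)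
  obtain ⟨φ, hφ, hφc⟩ := exists_flow_of_lipschitzWith_of_norm_le hT
    (fun x ↦ (hFc.uncurry_right _).continuousOn) (fun t _ ↦ hGlip t) hGbound ((m + M) / 2)
    ((M - m) / 2).toNNReal
  have hball : Metric.closedBall ((m + M) / 2) ((M - m) / 2).toNNReal = Icc m M := by
    rw [Real.closedBall_eq_Icc, Real.coe_toNNReal _ (by linarith)]
    congr 1 <;> ring
  rw [hball] at hφ hφc
  refine ⟨φ, fun x hx ↦ ⟨(hφ x hx).1, fun t ht ↦ ?_⟩, hφc T (right_mem_Icc.2 hT)⟩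
  have hmem := mem_Icc_of_hasDerivWithinAt (F := G)
    (fun t ↦ by rw [hGF t m ⟨le_rfl, hmM⟩]; exact hm t)
    (fun t ↦ by rw [hGF t M ⟨hmM, le_rfl⟩]; exact hM t) (hφ x hx).2 ((hφ x hx).1.symm ▸ hx) t ht
  exact ⟨hmem, hGF t _ hmem ▸ (hφ x hx).2 t ht⟩

theorem exists_periodic_solution_mem_Icc {F : ℝ → ℝ → ℝ} {T m M : ℝ} {K : ℝ≥0} (hT : 0 < T)
    (hmM : m ≤ M) (hF : Periodic F T) (hFc : Continuous (uncurry F))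
    (hlip : ∀ t, LipschitzOnWith K (F t) (Icc m M)) (hm : ∀ t, 0 < F t m)
    (hM : ∀ t, F t M < 0) :
    ∃ u : ℝ → ℝ, (∀ t, HasDerivAt u (F t (u t)) t) ∧ Periodic u T ∧ ∀ t, u t ∈ Icc m M := by
  obtain ⟨φ, hφ, hφc⟩ := exists_flow_mapsTo_Icc hT.le hmM hFc hlip hm hM
  obtain ⟨p, hp, hpT⟩ := exists_mem_Icc_isFixedPt_of_mapsTo hφc hmM
    fun x hx ↦ ((hφ x hx).2 T (right_mem_Icc.2 hT.le)).1
  set V : ℝ → ℝ := fun t ↦ φ p (toIcoMod hT 0 t)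
  have hVper : Periodic V T := fun t ↦ by simp [V, toIcoMod_add_right]
  have hVeq : EqOn V (φ p) (Icc 0 T) := by
    intro t ht
    rcases ht.2.lt_or_eq with htT | htT
    · exact congrArg (φ p) ((toIcoMod_eq_self hT).2 ⟨ht.1, by rwa [zero_add]⟩)
    · have h := toIcoMod_apply_right hT 0
      rw [zero_add] at h
      simp only [V, htT, h, (hφ p hp).1]
      exact hpT.symm
  have hVmem : ∀ t, V t ∈ Icc m M := fun t ↦
    ((hφ p hp).2 _ (Ico_subset_Icc_self (by simpa using toIcoMod_mem_Ico hT 0 t))).1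
  refine ⟨V, hVper.hasDerivAt_of_hasDerivWithinAt_Icc hT hF fun t ht ↦ ?_, hVper, hVmem⟩
  rw [hVeq ht]
  exact ((hφ p hp).2 t ht).2.congr hVeq (hVeq ht)

theorem Function.Periodic.exists_forall_abs_le {f : ℝ → ℝ} {T : ℝ} (hf : Periodic f T)
    (hT : T ≠ 0) (hc : Continuous f) : ∃ C, ∀ t, |f t| ≤ C := by
  obtain ⟨C, hC⟩ := isBounded_iff_forall_norm_le.1 (hf.isBounded_of_continuous hT hc)
  exact ⟨C, fun t ↦ hC _ (mem_range_self t)⟩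

theorem Function.Periodic.exists_forall_le {f : ℝ → ℝ} {T : ℝ} (hf : Periodic f T)
    (hT : T ≠ 0) (hc : Continuous f) : ∃ t₀, ∀ t, f t₀ ≤ f t := by
  obtain ⟨_, ⟨t₀, rfl⟩, h⟩ := (hf.compact_of_continuous hT hc).exists_isLeast (range_nonempty f)
  exact ⟨t₀, fun t ↦ h (mem_range_self t)⟩

theorem Function.Periodic.eq_of_tendsto_atTop {α : Type*} [TopologicalSpace α] [T2Space α]
    {f : ℝ → α} {T : ℝ} {l : α} (hf : Periodic f T) (hT : 0 < T)
    (hl : Tendsto f atTop (𝓝 l)) (t : ℝ) : f t = l := by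
  have hseq : Tendsto (fun n : ℕ ↦ t + n * T) atTop atTop :=
    tendsto_atTop_add_const_left _ t (tendsto_natCast_atTop_atTop.atTop_mul_const hT)
  refine tendsto_nhds_unique tendsto_const_nhds ((hl.comp hseq).congr fun n ↦ ?_)
  exact (hf.nat_mul n) t

theorem Function.Periodic.tendsto_intervalIntegral_atTop_atBot_of_neg {g : ℝ → ℝ} {T : ℝ}
    (hg : Periodic g T) (h₀ : ∫ x in 0..T, g x < 0) (hT : 0 < T) :
    Tendsto (fun t ↦ ∫ x in 0..t, g x) atTop atBot := by
  have hneg : Periodic (fun x ↦ -g x) T := fun x ↦ by simp [hg x]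
  have h := hneg.tendsto_atTop_intervalIntegral_of_pos
    (by rw [intervalIntegral.integral_neg]; linarith) hT
  simpa [intervalIntegral.integral_neg, comp_def] using tendsto_neg_atTop_atBot.comp h

theorem abs_le_mul_exp_of_hasDerivWithinAt_mul {v c g G : ℝ → ℝ} {t₀ : ℝ}
    (hv : ∀ t ∈ Ici t₀, HasDerivWithinAt v (c t * v t) (Ici t₀) t)
    (hG : ∀ t, HasDerivAt G (g t) t) (hcg : ∀ t ∈ Ici t₀, c t ≤ g t) :
    ∀ t ∈ Ici t₀, |v t| ≤ |v t₀| * Real.exp (G t - G t₀) := by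
  set φ : ℝ → ℝ := fun t ↦ v t ^ 2 * Real.exp (-(2 * G t))
  have hφ : AntitoneOn φ (Ici t₀) := by
    refine antitoneOn_of_hasDerivWithinAt_nonpos (convex_Ici t₀)
      (f' := fun t ↦ 2 * (c t - g t) * φ t) (fun t ht ↦ ?_) (fun t ht ↦ ?_) fun t ht ↦ ?_
    · exact ((hv t ht).continuousWithinAt.pow 2).mul
        ((hG t).continuousAt.const_mul 2).neg.rexp.continuousWithinAt
    · rw [interior_Ici] at ht ⊢
      have hvt := (hv t (mem_Ici.2 ht.le)).hasDerivAt (Ici_mem_nhds ht)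
      refine ((hvt.pow 2).mul ((hG t).const_mul 2).neg.exp).hasDerivWithinAt.congr_deriv ?_
      simp only [φ, Pi.neg_apply, Pi.pow_apply]
      ring
    · rw [interior_Ici] at ht
      exact mul_nonpos_of_nonpos_of_nonneg (by linarith [hcg t (mem_Ici.2 ht.le)]) (by positivity)
  intro t ht
  refine abs_le_of_sq_le_sq ?_ (by positivity)
  calc v t ^ 2 = φ t * Real.exp (2 * G t) := by simp [φ, mul_assoc, ← Real.exp_add]
    _ ≤ φ t₀ * Real.exp (2 * G t) := by gcongr; exact hφ self_mem_Ici ht ht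
    _ = (|v t₀| * Real.exp (G t - G t₀)) ^ 2 := by
      simp only [φ, mul_pow, sq_abs, sq (Real.exp _), mul_assoc, ← Real.exp_add]
      ring_nf

def riccati (a b d : ℝ → ℝ) (t x : ℝ) : ℝ := x * (a t - b t * x) + d t

section Riccati

variable {a b d : ℝ → ℝ} {T : ℝ}

theorem Function.Periodic.riccati (ha : Periodic a T) (hb : Periodic b T) (hd : Periodic d T) :
    Periodic (riccati a b d) T := fun t ↦ by
  funext x
  simp [_root_.riccati, ha t, hb t, hd t]

theorem continuous_uncurry_riccati (ha : Continuous a) (hb : Continuous b) (hd : Continuous d) :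
    Continuous (uncurry (riccati a b d)) := by
  unfold riccati uncurry
  fun_prop

theorem riccati_lipschitzOnWith {A B M : ℝ} (hA : ∀ t, |a t| ≤ A) (hB : ∀ t, |b t| ≤ B)
    (hM : 0 ≤ M) (t : ℝ) :
    LipschitzOnWith (A + 2 * M * B).toNNReal (riccati a b d t) (Icc 0 M) := by
  have hB0 : 0 ≤ B := (abs_nonneg _).trans (hB 0)
  refine LipschitzOnWith.of_dist_le_mul fun x hx y hy ↦ ?_
  have hxy : riccati a b d t x - riccati a b d t y = (a t - b t * (x + y)) * (x - y) := by
    simp only [riccati]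
    ring
  have hsum : |x + y| ≤ 2 * M := by
    rw [abs_of_nonneg (by linarith [hx.1, hy.1])]
    linarith [hx.2, hy.2]
  rw [Real.dist_eq, Real.dist_eq, hxy, abs_mul,
    Real.coe_toNNReal _ (by linarith [(abs_nonneg _).trans (hA 0), mul_nonneg hM hB0])]
  gcongr
  calc |a t - b t * (x + y)| ≤ |a t| + |b t| * |x + y| := by
        rw [← abs_mul]; exact abs_sub _ _
    _ ≤ A + B * (2 * M) := by gcongr; exacts [hA t, hB t]
    _ = A + 2 * M * B := by ring

theorem riccati_neg_of_le {A D b₀ : ℝ} (hA : ∀ t, |a t| ≤ A) (hD : ∀ t, |d t| ≤ D)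
    (hb₀ : 0 < b₀) (hb : ∀ t, b₀ ≤ b t) (t : ℝ) :
    riccati a b d t (1 + (A + D) / b₀) < 0 := by
  have hA0 : 0 ≤ A := (abs_nonneg _).trans (hA 0)
  have hD0 : 0 ≤ D := (abs_nonneg _).trans (hD 0)
  set M := 1 + (A + D) / b₀
  have hM : b₀ * M = b₀ + A + D := by simp only [M]; field_simp; ring
  have hM1 : 1 ≤ M := le_add_of_nonneg_right (by positivity)
  have ha : M * a t ≤ M * A := by gcongr; exact (le_abs_self _).trans (hA t)
  have hbM : b₀ * M * M ≤ b t * M * M := by gcongr; exact hb t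
  have hd : d t ≤ D := (le_abs_self _).trans (hD t)
  simp only [riccati]
  nlinarith

theorem pos_of_riccati_of_nonneg {u : ℝ → ℝ} (hu : ∀ t, HasDerivAt u (riccati a b d t (u t)) t)
    (hnonneg : ∀ t, 0 ≤ u t) (hd : ∀ t, 0 < d t) (t : ℝ) : 0 < u t := by
  refine (hnonneg t).lt_of_ne fun h ↦ ?_
  have hmin : IsLocalMin u t := Eventually.of_forall fun s ↦ h ▸ hnonneg s
  have := hmin.hasDerivAt_eq_zero (hu t)
  simp only [riccati, ← h, zero_mul, zero_add] at this
  exact (hd t).ne' this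

theorem exists_pos_periodic_solution_riccati (hT : 0 < T) (hac : Continuous a)
    (hbc : Continuous b) (hdc : Continuous d) (ha : Periodic a T) (hb : Periodic b T)
    (hd : Periodic d T) (hbpos : ∀ t, 0 < b t) (hdpos : ∀ t, 0 < d t) :
    ∃ u : ℝ → ℝ, (∀ t, HasDerivAt u (riccati a b d t (u t)) t) ∧ Periodic u T ∧
      ∀ t, 0 < u t := by
  obtain ⟨A, hA⟩ := ha.exists_forall_abs_le hT.ne' hac
  obtain ⟨B, hB⟩ := hb.exists_forall_abs_le hT.ne' hbc
  obtain ⟨D, hD⟩ := hd.exists_forall_abs_le hT.ne' hdc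
  obtain ⟨t₀, ht₀⟩ := hb.exists_forall_le hT.ne' hbc
  have hM : 0 ≤ 1 + (A + D) / b t₀ := by
    have := (abs_nonneg _).trans (hA 0)
    have := (abs_nonneg _).trans (hD 0)
    have := hbpos t₀
    positivity
  obtain ⟨u, hu, hper, hmem⟩ := exists_periodic_solution_mem_Icc hT hM (ha.riccati hb hd)
    (continuous_uncurry_riccati hac hbc hdc) (riccati_lipschitzOnWith hA hB hM)
    (fun t ↦ by simpa [riccati] using hdpos t) (riccati_neg_of_le hA hD (hbpos t₀) ht₀)
  exact ⟨u, hu, hper, pos_of_riccati_of_nonneg hu (fun t ↦ (hmem t).1) hdpos⟩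

theorem nonneg_of_riccati_of_hasDerivWithinAt_Ici {u : ℝ → ℝ} {t₀ : ℝ} (hd : ∀ t, 0 < d t)
    (hu : ∀ t ∈ Ici t₀, HasDerivWithinAt u (riccati a b d t (u t)) (Ici t₀) t)
    (hu₀ : 0 ≤ u t₀) : ∀ t ∈ Ici t₀, 0 ≤ u t := fun t ht ↦
  le_image_of_deriv_right_pos_of_eq (t₁ := t)
    (fun s hs ↦ (hu s hs.1).continuousWithinAt.mono Icc_subset_Ici_self)
    (fun s hs ↦ (hu s hs.1).mono (Ici_subset_Ici.2 hs.1)) hu₀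
    (fun s _ h ↦ by simpa [riccati, h] using hd s) t ⟨ht, le_rfl⟩

-- Integrate `(log u)' = a - b u + d / u` over a period.
theorem integral_sub_mul_eq_neg_integral_div {u : ℝ → ℝ} (hac : Continuous a)
    (hbc : Continuous b) (hdc : Continuous d)
    (hu : ∀ t, HasDerivAt u (riccati a b d t (u t)) t) (hpos : ∀ t, 0 < u t) (huT : u T = u 0) :
    ∫ t in 0..T, (a t - b t * u t) = -∫ t in 0..T, d t / u t := by
  have huc : Continuous u := continuous_iff_continuousAt.2 fun t ↦ (hu t).continuousAt
  have hlog : ∀ t, HasDerivAt (fun t ↦ Real.log (u t)) ((a t - b t * u t) + d t / u t) t :=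
    fun t ↦ ((hu t).log (hpos t).ne').congr_deriv
      (by rw [riccati, add_div, mul_div_cancel_left₀ _ (hpos t).ne'])
  have h := intervalIntegral.integral_eq_sub_of_hasDerivAt (fun t _ ↦ hlog t)
    (((hac.sub (hbc.mul huc)).add (hdc.div huc fun t ↦ (hpos t).ne')).intervalIntegrable 0 T)
  rw [huT, sub_self, intervalIntegral.integral_add (f := fun t ↦ a t - b t * u t)
    (g := fun t ↦ d t / u t) ((hac.sub (hbc.mul huc)).intervalIntegrable 0 T)
    ((hdc.div huc fun t ↦ (hpos t).ne').intervalIntegrable 0 T)] at h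
  linarith

theorem tendsto_sub_of_riccati (hT : 0 < T) (hac : Continuous a) (hbc : Continuous b)
    (hdc : Continuous d) (ha : Periodic a T) (hb : Periodic b T) (hbnonneg : ∀ t, 0 ≤ b t)
    (hdpos : ∀ t, 0 < d t) {w u : ℝ → ℝ} (hw : ∀ t, HasDerivAt w (riccati a b d t (w t)) t)
    (hwper : Periodic w T) (hwpos : ∀ t, 0 < w t)
    (hu : ∀ t ∈ Ici 0, HasDerivWithinAt u (riccati a b d t (u t)) (Ici 0) t) (hu₀ : 0 ≤ u 0) :
    Tendsto (fun t ↦ u t - w t) atTop (𝓝 0) := by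
  have hwc : Continuous w := continuous_iff_continuousAt.2 fun t ↦ (hw t).continuousAt
  set G : ℝ → ℝ := fun t ↦ ∫ s in 0..t, (a s - b s * w s)
  have hG : ∀ t, HasDerivAt G (a t - b t * w t) t := fun t ↦
    ((hac.sub (hbc.mul hwc)).integral_hasStrictDerivAt 0 t).hasDerivAt
  have hunonneg := nonneg_of_riccati_of_hasDerivWithinAt_Ici hdpos hu hu₀
  have hbound := abs_le_mul_exp_of_hasDerivWithinAt_mul (v := fun t ↦ u t - w t)
    (c := fun t ↦ a t - b t * (u t + w t))
    (fun t ht ↦ ((hu t ht).sub (hw t).hasDerivWithinAt).congr_deriv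
      (by simp only [riccati]; ring)) hG
    (fun t ht ↦ by nlinarith [mul_nonneg (hbnonneg t) (hunonneg t ht)])
  have hGlim : Tendsto G atTop atBot := by
    have hper : Periodic (fun t ↦ a t - b t * w t) T := ha.sub (hb.mul hwper)
    refine hper.tendsto_intervalIntegral_atTop_atBot_of_neg ?_ hT
    rw [integral_sub_mul_eq_neg_integral_div hac hbc hdc hw hwpos (by simpa using hwper 0),
      neg_lt_zero]
    exact intervalIntegral.intervalIntegral_pos_of_pos
      ((hdc.div hwc fun t ↦ (hwpos t).ne').intervalIntegrable 0 T)
      (fun t ↦ div_pos (hdpos t) (hwpos t)) hT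
  refine squeeze_zero_norm' ((eventually_ge_atTop 0).mono fun t ht ↦ hbound t ht) ?_
  simpa [G] using (Real.tendsto_exp_atBot.comp hGlim).const_mul |u 0 - w 0|

end Riccati

theorem unique_attracting_positive_periodic_solution_scalar_ode
    (T : ℝ) (hT : 0 < T)
    (a b d : ℝ → ℝ)
    (hac : Continuous a) (hbc : Continuous b) (hdc : Continuous d)
    (hap : ∀ t, a (t + T) = a t) (hbp : ∀ t, b (t + T) = b t)
    (hdp : ∀ t, d (t + T) = d t)
    (hbpos : ∀ t, 0 < b t) (hdpos : ∀ t, 0 < d t) :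
    ∃ ustar : ℝ → ℝ,
      ((∀ t, HasDerivAt ustar (ustar t * (a t - b t * ustar t) + d t) t) ∧
        (∀ t, ustar (t + T) = ustar t) ∧ (∀ t, 0 < ustar t)) ∧
      (∀ w : ℝ → ℝ,
        ((∀ t, HasDerivAt w (w t * (a t - b t * w t) + d t) t) ∧
          (∀ t, w (t + T) = w t) ∧ (∀ t, 0 < w t)) → w = ustar) ∧
      (∀ u : ℝ → ℝ,
        (∀ t ∈ Set.Ici (0:ℝ),
          HasDerivWithinAt u (u t * (a t - b t * u t) + d t) (Set.Ici 0) t) →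
        0 ≤ u 0 →
        Tendsto (fun t => u t - ustar t) atTop (𝓝 0)) := by
  obtain ⟨ustar, hustar, hper, hpos⟩ :=
    exists_pos_periodic_solution_riccati hT hac hbc hdc hap hbp hdp hbpos hdpos
  have hattract := fun u hu hu₀ ↦ tendsto_sub_of_riccati hT hac hbc hdc hap hbp
    (fun t ↦ (hbpos t).le) hdpos hustar hper hpos (u := u) hu hu₀
  refine ⟨ustar, ⟨hustar, hper, hpos⟩, ?_, hattract⟩
  rintro w ⟨hw, hwper, hwpos⟩
  funext t
  have hlim := hattract w (fun t _ ↦ (hw t).hasDerivWithinAt) (hwpos 0).le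
  exact sub_eq_zero.1 ((Periodic.sub hwper hper).eq_of_tendsto_atTop hT hlim t)
end

section
/- Let T > 0, let a1, a2 : ℝ → ℝ be continuous and T-periodic, and let b1, b2, c1, c2, d1, d2 : ℝ → ℝ be continuous, T-periodic, and everywhere positive. Suppose (u⁻, v⁻) and (u⁺, v⁺) are two T-periodic solutions of the system u' = u(a1(t) − b1(t) u − c1(t) v) + d1(t), v' = v(a2(t) − b2(t) u − c2(t) v) + d2(t) with u⁻(t), v⁻(t), u⁺(t), v⁺(t) > 0, u⁻(t) < u⁺(t), and v⁻(t) > v⁺(t) for all t. Then b1_L · ∫₀ᵀ (u⁺(t) − u⁻(t)) dt < c1_M · ∫₀ᵀ (v⁻(t) − v⁺(t)) dt and c2_L · ∫₀ᵀ (v⁻(t) − v⁺(t)) dt < b2_M · ∫₀ᵀ (u⁺(t) − u⁻(t)) dt. -/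
/-!
Integrating `(log u)' = a₁ - b₁ u - c₁ v + d₁ / u` over a period gives `0` for every positive
periodic solution. Subtracting the identities for the two ordered solutions, `a₁` cancels and
`∫ (b₁ (u⁺ - u⁻) - c₁ (v⁻ - v⁺)) = -∫ d₁ (1/u⁻ - 1/u⁺) < 0`; bounding `b₁` from below and `c₁`
from above gives the first inequality, and the second is the same argument for `v`.
-/

open intervalIntegral

open Set in
theorem iInf_mul_integral_lt_iSup_mul_integral {a b : ℝ} (hab : a ≤ b) {p q X Y : ℝ → ℝ}
    (hp : BddBelow (range p)) (hq : BddAbove (range q))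
    (hpc : Continuous p) (hqc : Continuous q) (hXc : Continuous X) (hYc : Continuous Y)
    (hX : ∀ t, 0 ≤ X t) (hY : ∀ t, 0 ≤ Y t)
    (h : 0 < ∫ t in a..b, (q t * Y t - p t * X t)) :
    (⨅ t, p t) * ∫ t in a..b, X t < (⨆ t, q t) * ∫ t in a..b, Y t := by
  have hle : ∫ t in a..b, (q t * Y t - p t * X t) ≤
      ∫ t in a..b, ((⨆ t, q t) * Y t - (⨅ t, p t) * X t) :=
    integral_mono_on hab (Continuous.intervalIntegrable (by fun_prop) a b)
      (Continuous.intervalIntegrable (by fun_prop) a b) fun t _ =>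
      sub_le_sub (mul_le_mul_of_nonneg_right (le_ciSup hq t) (hY t))
        (mul_le_mul_of_nonneg_right (ciInf_le hp t) (hX t))
  rw [integral_sub ((hYc.intervalIntegrable a b).const_mul _)
      ((hXc.intervalIntegrable a b).const_mul _),
    integral_const_mul, integral_const_mul] at hle
  linarith

theorem continuous_of_forall_hasDerivAt {f f' : ℝ → ℝ} (hf : ∀ t, HasDerivAt f (f' t) t) :
    Continuous f :=
  continuous_iff_continuousAt.2 fun t => (hf t).continuousAt

theorem integral_sub_pos_of_ordered_periodic_solutions {T : ℝ} (hT : 0 < T)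
    {a d e₁ e₂ w₁ w₂ : ℝ → ℝ} (hd : Continuous d) (hd_pos : ∀ t, 0 < d t)
    (he₁ : Continuous e₁) (he₂ : Continuous e₂)
    (hw₁ : ∀ t, HasDerivAt w₁ (w₁ t * (a t - e₁ t) + d t) t)
    (hw₂ : ∀ t, HasDerivAt w₂ (w₂ t * (a t - e₂ t) + d t) t)
    (hw₁_pos : ∀ t, 0 < w₁ t) (hw₂_pos : ∀ t, 0 < w₂ t)
    (hw₁T : w₁ T = w₁ 0) (hw₂T : w₂ T = w₂ 0) (hlt : ∀ t, w₁ t < w₂ t) :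
    0 < ∫ t in (0:ℝ)..T, (e₁ t - e₂ t) := by
  have hw₁c := continuous_of_forall_hasDerivAt hw₁
  have hw₂c := continuous_of_forall_hasDerivAt hw₂
  set C : ℝ → ℝ := fun t => d t * ((w₁ t)⁻¹ - (w₂ t)⁻¹)
  have hCc : Continuous C :=
    hd.mul ((hw₁c.inv₀ fun t => (hw₁_pos t).ne').sub (hw₂c.inv₀ fun t => (hw₂_pos t).ne'))
  have hlog : ∀ t, HasDerivAt (fun s => Real.log (w₁ s) - Real.log (w₂ s))
      (e₂ t - e₁ t + C t) t := fun t =>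
    ((hw₁ t).log (hw₁_pos t).ne').sub ((hw₂ t).log (hw₂_pos t).ne') |>.congr_deriv <| by
      simp only [C]
      field_simp [(hw₁_pos t).ne', (hw₂_pos t).ne']
      ring
  have hzero : ∫ t in (0:ℝ)..T, (e₂ t - e₁ t + C t) = 0 := by
    rw [integral_eq_sub_of_hasDerivAt (fun t _ => hlog t)
      (((he₂.sub he₁).add hCc).intervalIntegrable 0 T), hw₁T, hw₂T, sub_self]
  have hC_pos : 0 < ∫ t in (0:ℝ)..T, C t :=
    intervalIntegral_pos_of_pos (hCc.intervalIntegrable 0 T)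
      (fun t => mul_pos (hd_pos t) (sub_pos.2 ((inv_lt_inv₀ (hw₂_pos t) (hw₁_pos t)).2 (hlt t))))
      hT
  rw [integral_add (f := fun t => e₂ t - e₁ t) ((he₂.sub he₁).intervalIntegrable 0 T)
      (hCc.intervalIntegrable 0 T),
    integral_sub (he₂.intervalIntegrable 0 T) (he₁.intervalIntegrable 0 T)] at hzero
  rw [integral_sub (he₁.intervalIntegrable 0 T) (he₂.intervalIntegrable 0 T)]
  linarith

theorem integral_inequalities_for_ordered_periodic_solutions_general
    (T : ℝ) (hT : 0 < T)
    (a1 a2 b1 b2 c1 c2 d1 d2 : ℝ → ℝ)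
    (hb1c : Continuous b1) (hb2c : Continuous b2)
    (hc1c : Continuous c1) (hc2c : Continuous c2)
    (hd1c : Continuous d1) (hd2c : Continuous d2)
    (hb1p : ∀ t, b1 (t + T) = b1 t) (hb2p : ∀ t, b2 (t + T) = b2 t)
    (hc1p : ∀ t, c1 (t + T) = c1 t) (hc2p : ∀ t, c2 (t + T) = c2 t)
    (hd1pos : ∀ t, 0 < d1 t) (hd2pos : ∀ t, 0 < d2 t)
    (um vm up vp : ℝ → ℝ)
    (hum : ∀ t, HasDerivAt um (um t * (a1 t - b1 t * um t - c1 t * vm t) + d1 t) t)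
    (hvm : ∀ t, HasDerivAt vm (vm t * (a2 t - b2 t * um t - c2 t * vm t) + d2 t) t)
    (hup : ∀ t, HasDerivAt up (up t * (a1 t - b1 t * up t - c1 t * vp t) + d1 t) t)
    (hvp : ∀ t, HasDerivAt vp (vp t * (a2 t - b2 t * up t - c2 t * vp t) + d2 t) t)
    (humP : ∀ t, um (t + T) = um t) (hvmP : ∀ t, vm (t + T) = vm t)
    (hupP : ∀ t, up (t + T) = up t) (hvpP : ∀ t, vp (t + T) = vp t)
    (humpos : ∀ t, 0 < um t) (hvmpos : ∀ t, 0 < vm t)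
    (huppos : ∀ t, 0 < up t) (hvppos : ∀ t, 0 < vp t)
    (horder1 : ∀ t, um t < up t) (horder2 : ∀ t, vp t < vm t) :
    (⨅ t, b1 t) * (∫ t in (0:ℝ)..T, (up t - um t)) <
      (⨆ t, c1 t) * (∫ t in (0:ℝ)..T, (vm t - vp t)) ∧
    (⨅ t, c2 t) * (∫ t in (0:ℝ)..T, (vm t - vp t)) <
      (⨆ t, b2 t) * (∫ t in (0:ℝ)..T, (up t - um t)) := by
  have humc := continuous_of_forall_hasDerivAt hum
  have hvmc := continuous_of_forall_hasDerivAt hvm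
  have hupc := continuous_of_forall_hasDerivAt hup
  have hvpc := continuous_of_forall_hasDerivAt hvp
  have hu := integral_sub_pos_of_ordered_periodic_solutions hT hd1c hd1pos (a := a1)
    (e₁ := fun t => b1 t * um t + c1 t * vm t) (e₂ := fun t => b1 t * up t + c1 t * vp t)
    (by fun_prop) (by fun_prop) (fun t => (hum t).congr_deriv (by ring))
    (fun t => (hup t).congr_deriv (by ring)) humpos huppos
    (by simpa using humP 0) (by simpa using hupP 0) horder1
  have hv := integral_sub_pos_of_ordered_periodic_solutions hT hd2c hd2pos (a := a2)
    (e₁ := fun t => b2 t * up t + c2 t * vp t) (e₂ := fun t => b2 t * um t + c2 t * vm t)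
    (by fun_prop) (by fun_prop) (fun t => (hvp t).congr_deriv (by ring))
    (fun t => (hvm t).congr_deriv (by ring)) hvppos hvmpos
    (by simpa using hvpP 0) (by simpa using hvmP 0) horder2
  constructor
  · refine iInf_mul_integral_lt_iSup_mul_integral hT.le
      (Function.Periodic.compact_of_continuous hb1p hT.ne' hb1c).bddBelow
      (Function.Periodic.compact_of_continuous hc1p hT.ne' hc1c).bddAbove hb1c hc1c
      (hupc.sub humc) (hvmc.sub hvpc) (fun t => sub_nonneg.2 (horder1 t).le)
      (fun t => sub_nonneg.2 (horder2 t).le) ?_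
    exact hu.trans_eq (integral_congr fun t _ => by ring)
  · refine iInf_mul_integral_lt_iSup_mul_integral hT.le
      (Function.Periodic.compact_of_continuous hc2p hT.ne' hc2c).bddBelow
      (Function.Periodic.compact_of_continuous hb2p hT.ne' hb2c).bddAbove hc2c hb2c
      (hvmc.sub hvpc) (hupc.sub humc) (fun t => sub_nonneg.2 (horder2 t).le)
      (fun t => sub_nonneg.2 (horder1 t).le) ?_
    exact hv.trans_eq (integral_congr fun t _ => by ring)

theorem integral_inequalities_for_ordered_periodic_solutions
    (T : ℝ) (hT : 0 < T)
    (a1 a2 b1 b2 c1 c2 d1 d2 : ℝ → ℝ)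
    (ha1c : Continuous a1) (ha2c : Continuous a2)
    (hb1c : Continuous b1) (hb2c : Continuous b2)
    (hc1c : Continuous c1) (hc2c : Continuous c2)
    (hd1c : Continuous d1) (hd2c : Continuous d2)
    (ha1p : ∀ t, a1 (t + T) = a1 t) (ha2p : ∀ t, a2 (t + T) = a2 t)
    (hb1p : ∀ t, b1 (t + T) = b1 t) (hb2p : ∀ t, b2 (t + T) = b2 t)
    (hc1p : ∀ t, c1 (t + T) = c1 t) (hc2p : ∀ t, c2 (t + T) = c2 t)
    (hd1p : ∀ t, d1 (t + T) = d1 t) (hd2p : ∀ t, d2 (t + T) = d2 t)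
    (hb1pos : ∀ t, 0 < b1 t) (hb2pos : ∀ t, 0 < b2 t)
    (hc1pos : ∀ t, 0 < c1 t) (hc2pos : ∀ t, 0 < c2 t)
    (hd1pos : ∀ t, 0 < d1 t) (hd2pos : ∀ t, 0 < d2 t)
    (um vm up vp : ℝ → ℝ)
    (hum : ∀ t, HasDerivAt um (um t * (a1 t - b1 t * um t - c1 t * vm t) + d1 t) t)
    (hvm : ∀ t, HasDerivAt vm (vm t * (a2 t - b2 t * um t - c2 t * vm t) + d2 t) t)
    (hup : ∀ t, HasDerivAt up (up t * (a1 t - b1 t * up t - c1 t * vp t) + d1 t) t)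
    (hvp : ∀ t, HasDerivAt vp (vp t * (a2 t - b2 t * up t - c2 t * vp t) + d2 t) t)
    (humP : ∀ t, um (t + T) = um t) (hvmP : ∀ t, vm (t + T) = vm t)
    (hupP : ∀ t, up (t + T) = up t) (hvpP : ∀ t, vp (t + T) = vp t)
    (humpos : ∀ t, 0 < um t) (hvmpos : ∀ t, 0 < vm t)
    (huppos : ∀ t, 0 < up t) (hvppos : ∀ t, 0 < vp t)
    (horder1 : ∀ t, um t < up t) (horder2 : ∀ t, vp t < vm t) :
    (⨅ t, b1 t) * (∫ t in (0:ℝ)..T, (up t - um t)) <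
      (⨆ t, c1 t) * (∫ t in (0:ℝ)..T, (vm t - vp t)) ∧
    (⨅ t, c2 t) * (∫ t in (0:ℝ)..T, (vm t - vp t)) <
      (⨆ t, b2 t) * (∫ t in (0:ℝ)..T, (up t - um t)) :=
  integral_inequalities_for_ordered_periodic_solutions_general T hT a1 a2 b1 b2 c1 c2 d1 d2 hb1c
    hb2c hc1c hc2c hd1c hd2c hb1p hb2p hc1p hc2p hd1pos hd2pos um vm up vp hum hvm hup hvp humP hvmP
    hupP hvpP humpos hvmpos huppos hvppos horder1 horder2
end

section
/- Let (u, v) be a solution of system (N) on [0, τ) for some τ > 0. If u(0,x) ≥ 0 and v(0,x) ≥ 0 for all x ∈ D̄, then u(t,x) ≥ 0 and v(t,x) ≥ 0 for all t ∈ [0, τ) and x ∈ D̄. -/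
open MeasureTheory Filter Topology

noncomputable section

/-- A solution of the Neumann-type nonlocal dispersal competition system on the
time interval `I`. -/
def IsSolN (N : ℕ) (D : Set (EuclideanSpace ℝ (Fin N)))
    (κ : EuclideanSpace ℝ (Fin N) → ℝ) (ν1 ν2 : ℝ)
    (a1 a2 b1 b2 c1 c2 : ℝ → EuclideanSpace ℝ (Fin N) → ℝ)
    (I : Set ℝ) (u v : ℝ → EuclideanSpace ℝ (Fin N) → ℝ) : Prop :=
  ContinuousOn (fun p : ℝ × EuclideanSpace ℝ (Fin N) => u p.1 p.2) (I ×ˢ closure D) ∧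
  ContinuousOn (fun p : ℝ × EuclideanSpace ℝ (Fin N) => v p.1 p.2) (I ×ˢ closure D) ∧
  (∀ t ∈ I, ∀ x ∈ closure D,
    HasDerivWithinAt (fun s => u s x)
      (ν1 * (∫ y in D, κ (y - x) * (u t y - u t x)) +
        u t x * (a1 t x - b1 t x * u t x - c1 t x * v t x)) I t ∧
    HasDerivWithinAt (fun s => v s x)
      (ν2 * (∫ y in D, κ (y - x) * (v t y - v t x)) +
        v t x * (a2 t x - b2 t x * u t x - c2 t x * v t x)) I t)

/-- The infimum of a function of `(t, x)` over `ℝ × S`. -/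
def infTD (N : ℕ) (f : ℝ → EuclideanSpace ℝ (Fin N) → ℝ)
    (S : Set (EuclideanSpace ℝ (Fin N))) : ℝ :=
  sInf (Set.image2 f Set.univ S)

/-- The supremum of a function of `(t, x)` over `ℝ × S`. -/
def supTD (N : ℕ) (f : ℝ → EuclideanSpace ℝ (Fin N) → ℝ)
    (S : Set (EuclideanSpace ℝ (Fin N))) : ℝ :=
  sSup (Set.image2 f Set.univ S)


/-!
Each equation of the system is linear in its own unknown: `∂ₜu = ν₁ 𝒦u + F₁ u` with the
continuous, hence locally bounded, coefficient `F₁ = a₁ - b₁u - c₁v`, and likewise for `v`.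
So it suffices to prove a minimum principle for one such scalar equation. If `|F| ≤ M`, the
function `g = w + δ e^{(M+1)t}` cannot reach the value `0` for a first time `t₀ > 0`: at a point
`x₀` where this happens, `x₀` minimises `w(t₀, ·)`, so the dispersal term is nonnegative and
`∂ₜg(t₀, x₀) ≥ M w + (M+1) δ e^{(M+1)t₀} = δ e^{(M+1)t₀} > 0`, whereas `g(·, x₀)` decreases to
`0` from the left. Letting `δ → 0` gives `w ≥ 0`.
-/

open Set

theorem IsMinOn.hasDerivWithinAt_Icc_right_nonpos {f : ℝ → ℝ} {f' a b : ℝ} (hab : a < b)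
    (hmin : IsMinOn f (Icc a b) b) (hf : HasDerivWithinAt f f' (Icc a b) b) : f' ≤ 0 := by
  have hdir : a - b ∈ posTangentConeAt (Icc a b) b :=
    sub_mem_posTangentConeAt_of_segment_subset (by rw [segment_symm, segment_eq_Icc hab.le])
  have h := hmin.localize.hasFDerivWithinAt_nonneg hf hdir
  simp only [ContinuousLinearMap.toSpanSingleton_apply, smul_eq_mul] at h
  exact nonpos_of_mul_nonneg_right h (sub_neg.2 hab)

theorem MeasureTheory.setIntegral_mul_sub_nonneg_of_isMinOn {α : Type*} [MeasurableSpace α]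
    {μ : Measure α} {D : Set α} (hD : MeasurableSet D) {J f : α → ℝ} (hJ : ∀ y, 0 ≤ J y)
    {x : α} (hmin : IsMinOn f D x) : 0 ≤ ∫ y in D, J y * (f y - f x) ∂μ :=
  setIntegral_nonneg hD fun y hy => mul_nonneg (hJ y) (sub_nonneg.2 (hmin hy))

section MinimumPrinciple

variable {X : Type*} [TopologicalSpace X] {S : Set X} {t₁ : ℝ}

theorem exists_first_nonpos (hS : IsCompact S) {g : ℝ → X → ℝ}
    (hg : ContinuousOn (fun p : ℝ × X => g p.1 p.2) (Icc 0 t₁ ×ˢ S))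
    (hneg : ∃ t ∈ Icc 0 t₁, ∃ x ∈ S, g t x ≤ 0) :
    ∃ t₀ ∈ Icc 0 t₁, ∃ x₀ ∈ S, g t₀ x₀ ≤ 0 ∧ ∀ s ∈ Ico 0 t₀, ∀ y ∈ S, 0 < g s y := by
  obtain ⟨t, ht, x, hx, hgx⟩ := hneg
  obtain ⟨C, hC, hCeq⟩ := continuousOn_iff_isClosed.1 hg (Iic 0) isClosed_Iic
  rw [inter_comm C] at hCeq
  set A := Prod.fst '' (Icc 0 t₁ ×ˢ S ∩ C)
  have hA : IsCompact A := ((isCompact_Icc.prod hS).inter_right hC).image continuous_fst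
  obtain ⟨⟨t₀, x₀⟩, hp₀, ht₀A⟩ := hA.sInf_mem ⟨t, (t, x), hCeq ▸ ⟨hgx, ht, hx⟩, rfl⟩
  obtain ⟨hgx₀, ht₀, hx₀⟩ := hCeq.symm ▸ hp₀
  refine ⟨t₀, ht₀, x₀, hx₀, hgx₀, fun s hs y hy => lt_of_not_ge fun hgy => ?_⟩
  have : sInf A ≤ s :=
    csInf_le hA.bddBelow ⟨(s, y), hCeq ▸ ⟨hgy, ⟨hs.1, hs.2.le.trans ht₀.2⟩, hy⟩, rfl⟩
  exact hs.2.not_ge ((le_of_eq ht₀A).trans this)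

theorem pos_of_hasDerivWithinAt_pos_of_isMinOn (hS : IsCompact S) {g g' : ℝ → X → ℝ}
    (hg : ContinuousOn (fun p : ℝ × X => g p.1 p.2) (Icc 0 t₁ ×ˢ S))
    (hderiv : ∀ t ∈ Ioc 0 t₁, ∀ x ∈ S, HasDerivWithinAt (g · x) (g' t x) (Icc 0 t) t)
    (hmin : ∀ t ∈ Ioc 0 t₁, ∀ x ∈ S, IsMinOn (g t) S x → g t x = 0 → 0 < g' t x)
    (h0 : ∀ x ∈ S, 0 < g 0 x) : ∀ t ∈ Icc 0 t₁, ∀ x ∈ S, 0 < g t x := by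
  by_contra! hneg
  obtain ⟨t₀, ht₀, x₀, hx₀, hgx₀, hbefore⟩ := exists_first_nonpos hS hg hneg
  have ht₀pos : 0 < t₀ :=
    ht₀.1.lt_of_ne fun h => (h0 x₀ hx₀).not_ge (h ▸ hgx₀)
  have hIoc : t₀ ∈ Ioc 0 t₁ := ⟨ht₀pos, ht₀.2⟩
  have hat : ∀ y ∈ S, 0 ≤ g t₀ y := fun y hy => by
    have h := ((hderiv t₀ hIoc y hy).continuousWithinAt.mono Ico_subset_Icc_self).mem_closure
      (t := Ici 0) (by simp [closure_Ico ht₀pos.ne, ht₀pos.le])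
      fun s hs => (hbefore s hs y hy).le
    simpa using h
  have hzero : g t₀ x₀ = 0 := le_antisymm hgx₀ (hat x₀ hx₀)
  have hminx : IsMinOn (g t₀) S x₀ := isMinOn_iff.2 fun y hy => hzero ▸ hat y hy
  have hmint : IsMinOn (g · x₀) (Icc 0 t₀) t₀ := isMinOn_iff.2 fun s hs => by
    rcases hs.2.lt_or_eq with hlt | rfl
    · exact hzero ▸ (hbefore s ⟨hs.1, hlt⟩ x₀ hx₀).le
    · exact le_rfl
  exact (hmin t₀ hIoc x₀ hx₀ hminx hzero).not_ge
    (hmint.hasDerivWithinAt_Icc_right_nonpos ht₀pos (hderiv t₀ hIoc x₀ hx₀))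

theorem nonneg_of_hasDerivWithinAt_ge_of_isMinOn (hS : IsCompact S) {M : ℝ} {w w' : ℝ → X → ℝ}
    (hw : ContinuousOn (fun p : ℝ × X => w p.1 p.2) (Icc 0 t₁ ×ˢ S))
    (hderiv : ∀ t ∈ Ioc 0 t₁, ∀ x ∈ S, HasDerivWithinAt (w · x) (w' t x) (Icc 0 t) t)
    (hmin : ∀ t ∈ Ioc 0 t₁, ∀ x ∈ S, IsMinOn (w t) S x → w t x < 0 → M * w t x ≤ w' t x)
    (h0 : ∀ x ∈ S, 0 ≤ w 0 x) : ∀ t ∈ Icc 0 t₁, ∀ x ∈ S, 0 ≤ w t x := by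
  set K := M + 1
  have hpert : ∀ δ > 0, ∀ t ∈ Icc 0 t₁, ∀ x ∈ S, 0 < w t x + δ * Real.exp (K * t) := by
    intro δ hδ
    have hexp : ∀ t, HasDerivAt (fun s => δ * Real.exp (K * s)) (δ * Real.exp (K * t) * K) t :=
      fun t => by simpa [mul_assoc] using (((hasDerivAt_id t).const_mul K).exp).const_mul δ
    refine pos_of_hasDerivWithinAt_pos_of_isMinOn hS
      (hw.add (by fun_prop)) (fun t ht x hx => (hderiv t ht x hx).add (hexp t).hasDerivWithinAt)
      (fun t ht x hx hminx hzero => ?_)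
      fun x hx => by simpa using add_pos_of_nonneg_of_pos (h0 x hx) hδ
    have hE : 0 < δ * Real.exp (K * t) := by positivity
    have hminw : IsMinOn (w t) S x := isMinOn_iff.2 fun y hy => by
      linarith [isMinOn_iff.1 hminx y hy]
    have hwx : w t x = -(δ * Real.exp (K * t)) := by linarith
    have := hmin t ht x hx hminw (by linarith)
    rw [hwx] at this
    linarith
  intro t ht x hx
  refine le_of_forall_pos_lt_add fun ε hε => ?_
  have h := hpert (ε * Real.exp (-(K * t))) (by positivity) t ht x hx
  rwa [mul_assoc, ← Real.exp_add, neg_add_cancel, Real.exp_zero, mul_one] at h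

end MinimumPrinciple

theorem nonneg_of_hasDerivWithinAt_nonlocal {E : Type*} [TopologicalSpace E] [MeasureSpace E]
    {D : Set E} (hD : MeasurableSet D) (hDc : IsCompact (closure D)) {J : E → E → ℝ}
    (hJ : ∀ x y, 0 ≤ J x y) {ν τ : ℝ} (hν : 0 ≤ ν) {w F : ℝ → E → ℝ}
    (hw : ContinuousOn (fun p : ℝ × E => w p.1 p.2) (Ico 0 τ ×ˢ closure D))
    (hF : ContinuousOn (fun p : ℝ × E => F p.1 p.2) (Ico 0 τ ×ˢ closure D))
    (hderiv : ∀ t ∈ Ico 0 τ, ∀ x ∈ closure D, HasDerivWithinAt (w · x)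
      (ν * (∫ y in D, J x y * (w t y - w t x)) + w t x * F t x) (Ico 0 τ) t)
    (h0 : ∀ x ∈ closure D, 0 ≤ w 0 x) : ∀ t ∈ Ico 0 τ, ∀ x ∈ closure D, 0 ≤ w t x := by
  intro t₁ ht₁ x hx
  have hsub : Icc 0 t₁ ⊆ Ico 0 τ := Icc_subset_Ico_right ht₁.2
  obtain ⟨M, hM⟩ := (isCompact_Icc.prod hDc).exists_bound_of_continuousOn
    (hF.mono (prod_mono hsub subset_rfl))
  refine nonneg_of_hasDerivWithinAt_ge_of_isMinOn hDc (M := M)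
    (hw.mono (prod_mono hsub subset_rfl))
    (fun t ht y hy => (hderiv t (hsub ⟨ht.1.le, ht.2⟩) y hy).mono
      (Icc_subset_Ico_right (ht.2.trans_lt ht₁.2)))
    ?_ h0 t₁ ⟨ht₁.1, le_rfl⟩ x hx
  intro t ht y hy hmin hneg
  have hI := setIntegral_mul_sub_nonneg_of_isMinOn (μ := volume)
    hD (hJ y) (hmin.on_subset subset_closure)
  have hFM : F t y ≤ M := (le_abs_self _).trans (by simpa using hM (t, y) ⟨⟨ht.1.le, ht.2⟩, hy⟩)
  have hreact : w t y * M ≤ w t y * F t y := mul_le_mul_of_nonpos_left hFM hneg.le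
  linarith [mul_nonneg hν hI]

theorem positivity_neumann_general
    (N : ℕ)
    (D : Set (EuclideanSpace ℝ (Fin N)))
    (hDo : IsOpen D) (hDbd : Bornology.IsBounded D)
    (κ : EuclideanSpace ℝ (Fin N) → ℝ)
    (r : ℝ)
    (hκpos : ∀ z, ‖z‖ < r → 0 < κ z)
    (hκsupp : ∀ z, r ≤ ‖z‖ → κ z = 0)
    (ν1 ν2 : ℝ) (hν1 : 0 < ν1) (hν2 : 0 < ν2)
    (a1 a2 b1 b2 c1 c2 : ℝ → EuclideanSpace ℝ (Fin N) → ℝ)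
    (hc : ∀ f ∈ [a1, a2, b1, b2, c1, c2],
      ContinuousOn (fun p : ℝ × EuclideanSpace ℝ (Fin N) => f p.1 p.2)
        ((Set.univ : Set ℝ) ×ˢ closure D))
    (τ : ℝ)
    (u v : ℝ → EuclideanSpace ℝ (Fin N) → ℝ)
    (hsol : IsSolN N D κ ν1 ν2 a1 a2 b1 b2 c1 c2 (Set.Ico 0 τ) u v)
    (hu0 : ∀ x ∈ closure D, 0 ≤ u 0 x)
    (hv0 : ∀ x ∈ closure D, 0 ≤ v 0 x) :
    ∀ t ∈ Set.Ico (0:ℝ) τ, ∀ x ∈ closure D, 0 ≤ u t x ∧ 0 ≤ v t x := by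
  obtain ⟨hu, hv, hder⟩ := hsol
  have hκ : ∀ x y, 0 ≤ κ (y - x) := fun x y =>
    (lt_or_ge ‖y - x‖ r).elim (fun h => (hκpos _ h).le) fun h => (hκsupp _ h).ge
  have hcoef : ∀ f ∈ [a1, a2, b1, b2, c1, c2], ContinuousOn
      (fun p : ℝ × EuclideanSpace ℝ (Fin N) => f p.1 p.2) (Ico 0 τ ×ˢ closure D) :=
    fun f hf => (hc f hf).mono (prod_mono (subset_univ _) subset_rfl)
  have hF1 := ((hcoef a1 (by simp)).sub ((hcoef b1 (by simp)).mul hu)).sub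
    ((hcoef c1 (by simp)).mul hv)
  have hF2 := ((hcoef a2 (by simp)).sub ((hcoef b2 (by simp)).mul hu)).sub
    ((hcoef c2 (by simp)).mul hv)
  intro t ht x hx
  exact ⟨nonneg_of_hasDerivWithinAt_nonlocal hDo.measurableSet hDbd.isCompact_closure hκ hν1.le
      hu hF1 (fun t ht x hx => (hder t ht x hx).1) hu0 t ht x hx,
    nonneg_of_hasDerivWithinAt_nonlocal hDo.measurableSet hDbd.isCompact_closure hκ hν2.le
      hv hF2 (fun t ht x hx => (hder t ht x hx).2) hv0 t ht x hx⟩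

theorem positivity_neumann
    (N : ℕ) (hN : 1 ≤ N)
    (D : Set (EuclideanSpace ℝ (Fin N)))
    (hDo : IsOpen D) (hDne : D.Nonempty) (hDbd : Bornology.IsBounded D)
    (κ : EuclideanSpace ℝ (Fin N) → ℝ) (hκc : Continuous κ)
    (r : ℝ) (hr : 0 < r)
    (hκpos : ∀ z, ‖z‖ < r → 0 < κ z)
    (hκsupp : ∀ z, r ≤ ‖z‖ → κ z = 0)
    (hκsymm : ∀ z, κ (-z) = κ z)
    (hκint : (∫ z, κ z) = 1)
    (T : ℝ) (hT : 0 < T)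
    (ν1 ν2 : ℝ) (hν1 : 0 < ν1) (hν2 : 0 < ν2)
    (a1 a2 b1 b2 c1 c2 : ℝ → EuclideanSpace ℝ (Fin N) → ℝ)
    (hc : ∀ f ∈ [a1, a2, b1, b2, c1, c2],
      ContinuousOn (fun p : ℝ × EuclideanSpace ℝ (Fin N) => f p.1 p.2)
        ((Set.univ : Set ℝ) ×ˢ closure D))
    (hpos : ∀ f ∈ [a1, a2, b1, b2, c1, c2], ∀ t, ∀ x ∈ closure D, 0 < f t x)
    (hper : ∀ f ∈ [a1, a2, b1, b2, c1, c2], ∀ t x, f (t + T) x = f t x)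
    (τ : ℝ) (hτ : 0 < τ)
    (u v : ℝ → EuclideanSpace ℝ (Fin N) → ℝ)
    (hsol : IsSolN N D κ ν1 ν2 a1 a2 b1 b2 c1 c2 (Set.Ico 0 τ) u v)
    (hu0 : ∀ x ∈ closure D, 0 ≤ u 0 x)
    (hv0 : ∀ x ∈ closure D, 0 ≤ v 0 x) :
    ∀ t ∈ Set.Ico (0:ℝ) τ, ∀ x ∈ closure D, 0 ≤ u t x ∧ 0 ≤ v t x :=
  positivity_neumann_general N D hDo hDbd κ r hκpos hκsupp ν1 ν2 hν1 hν2 a1 a2 b1 b2 c1 c2 hc τ u v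
    hsol hu0 hv0
end
end
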